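/- arXiv:1508.06624 — 5 statements merged into one kernel-verified Lean document; each statement's English description precedes it below -/
import Mathlib

section
/- With P1' := P1 ⊖_ε P2 defined as above and S1' := supp(P1'), S2 := range(P2), every pair of unit vectors v ∈ S1', w ∈ S2 satisfies |⟨v, w⟩| ≤ ε. -/
/-!
Every spectral projection `Q_x` of `P₁ P₂ P₁` with `λ_x ≠ 0` is fixed by `P₁` on both sides,
since `P₁ (P₁ P₂ P₁) = P₁ P₂ P₁ = (P₁ P₂ P₁) P₁`. Hence a vector `v` in the support of
`P₁ ⊖_ε P₂` satisfies `P₁ v = v` and `Q_x v = 0` whenever `λ_x > ε²`, so that for unit `v`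
`‖P₂ v‖² = ⟨v, P₁ P₂ P₁ v⟩ = Σ_x λ_x ‖Q_x v‖² ≤ ε²`. For a unit vector `w = P₂ w`,
Cauchy–Schwarz then gives `|⟨v, w⟩| = |⟨P₂ v, w⟩| ≤ ‖P₂ v‖ ≤ ε`.
-/

open Matrix
open scoped ComplexOrder Classical

/-- The `ε`-subtraction `P₁ ⊖_ε P₂ := P₁ − Σ_{x : λ_x ≥ ε², λ_x ≠ 0} Q_x`, where
`P₁ P₂ P₁ = Σ_x λ_x Q_x` is a spectral decomposition with data `(lam, Q)`. -/
noncomputable def epsSub {d : ℕ} {ι : Type*} [Fintype ι] (P1 : Matrix (Fin d) (Fin d) ℂ)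
    (lam : ι → ℝ) (Q : ι → Matrix (Fin d) (Fin d) ℂ) (ε : ℝ) : Matrix (Fin d) (Fin d) ℂ :=
  P1 - ∑ x ∈ Finset.univ.filter (fun x => ε ^ 2 ≤ lam x ∧ lam x ≠ 0), Q x

section OrthogonalFamily

variable {A ι : Type*} [Ring A] {Q : ι → A}

theorem mul_sum_of_orthogonal (hQidem : ∀ x, Q x * Q x = Q x)
    (hQorth : ∀ x y, x ≠ y → Q x * Q y = 0) {s : Finset ι} {x : ι} (hx : x ∈ s) :
    Q x * ∑ y ∈ s, Q y = Q x := by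
  rw [Finset.mul_sum, Finset.sum_eq_single_of_mem x hx
    (fun y _ hy => hQorth x y (Ne.symm hy)), hQidem]

variable {K : Type*} [Field K] [Algebra K A] [Fintype ι]

theorem sum_smul_mul_of_orthogonal (hQidem : ∀ x, Q x * Q x = Q x)
    (hQorth : ∀ x y, x ≠ y → Q x * Q y = 0) (c : ι → K) (x : ι) :
    (∑ y, c y • Q y) * Q x = c x • Q x := by
  rw [Finset.sum_mul, Finset.sum_eq_single x
    (fun y _ hy => by rw [smul_mul_assoc, hQorth y x hy, smul_zero]) (by simp),
    smul_mul_assoc, hQidem]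

theorem mul_sum_smul_of_orthogonal (hQidem : ∀ x, Q x * Q x = Q x)
    (hQorth : ∀ x y, x ≠ y → Q x * Q y = 0) (c : ι → K) (x : ι) :
    Q x * (∑ y, c y • Q y) = c x • Q x := by
  rw [Finset.mul_sum, Finset.sum_eq_single x
    (fun y _ hy => by rw [mul_smul_comm, hQorth x y hy.symm, smul_zero]) (by simp),
    mul_smul_comm, hQidem]

theorem mul_eq_right_of_compression_eq_sum (hQidem : ∀ x, Q x * Q x = Q x)
    (hQorth : ∀ x y, x ≠ y → Q x * Q y = 0) {P S : A} {c : ι → K} (hP : P * P = P)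
    (hspec : P * S * P = ∑ y, c y • Q y) {x : ι} (hx : c x ≠ 0) :
    P * Q x = Q x := by
  have hPM : P * (P * S * P) = P * S * P := by simp only [← mul_assoc, hP]
  refine smul_right_injective A hx ?_
  calc c x • (P * Q x) = P * ((∑ y, c y • Q y) * Q x) := by
        rw [sum_smul_mul_of_orthogonal hQidem hQorth, mul_smul_comm]
    _ = c x • Q x := by
        rw [← mul_assoc, ← hspec, hPM, hspec, sum_smul_mul_of_orthogonal hQidem hQorth]

theorem mul_eq_left_of_compression_eq_sum (hQidem : ∀ x, Q x * Q x = Q x)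
    (hQorth : ∀ x y, x ≠ y → Q x * Q y = 0) {P S : A} {c : ι → K} (hP : P * P = P)
    (hspec : P * S * P = ∑ y, c y • Q y) {x : ι} (hx : c x ≠ 0) :
    Q x * P = Q x := by
  have hMP : P * S * P * P = P * S * P := by rw [mul_assoc, hP]
  refine smul_right_injective A hx ?_
  calc c x • (Q x * P) = (Q x * ∑ y, c y • Q y) * P := by
        rw [mul_sum_smul_of_orthogonal hQidem hQorth, smul_mul_assoc]
    _ = c x • Q x := by
        rw [mul_assoc, ← hspec, hMP, hspec, mul_sum_smul_of_orthogonal hQidem hQorth]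

end OrthogonalFamily

section Matrix

variable {n : Type*} [Fintype n]

theorem star_dotProduct_mulVec_eq_of_idem {R : Type*} [CommRing R] [StarRing R]
    {Q : Matrix n n R} (hQ : Q.IsHermitian) (hQidem : Q * Q = Q) (v : n → R) :
    star v ⬝ᵥ (Q *ᵥ v) = star (Q *ᵥ v) ⬝ᵥ (Q *ᵥ v) := by
  rw [star_mulVec, ← dotProduct_mulVec, mulVec_mulVec, hQ.eq, hQidem]

theorem star_dotProduct_mul_mul_mulVec {R : Type*} [CommRing R] [StarRing R]
    {P : Matrix n n R} (hP : P.IsHermitian) (S : Matrix n n R) {v : n → R}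
    (hv : P *ᵥ v = v) :
    star v ⬝ᵥ ((P * S * P) *ᵥ v) = star v ⬝ᵥ (S *ᵥ v) := by
  rw [← mulVec_mulVec, ← mulVec_mulVec, hv, dotProduct_mulVec, ← hP.eq, ← star_mulVec, hv]

variable {𝕜 : Type*} [RCLike 𝕜]

theorem star_dotProduct_sum_smul_mulVec_le [DecidableEq n] {ι : Type*} [Fintype ι]
    (lam : ι → ℝ) {Q : ι → Matrix n n 𝕜} (hQherm : ∀ x, (Q x).IsHermitian)
    (hQidem : ∀ x, Q x * Q x = Q x) (hQsum : ∑ x, Q x = 1) (c : ℝ) {v : n → 𝕜}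
    (hv : ∀ x, c < lam x → Q x *ᵥ v = 0) :
    star v ⬝ᵥ ((∑ x, (lam x : 𝕜) • Q x) *ᵥ v) ≤ c * (star v ⬝ᵥ v) := by
  have hnonneg x : 0 ≤ star v ⬝ᵥ (Q x *ᵥ v) := by
    rw [star_dotProduct_mulVec_eq_of_idem (hQherm x) (hQidem x)]
    exact dotProduct_star_self_nonneg _
  calc star v ⬝ᵥ ((∑ x, (lam x : 𝕜) • Q x) *ᵥ v)
      = ∑ x, (lam x : 𝕜) * (star v ⬝ᵥ (Q x *ᵥ v)) := by
        simp only [sum_mulVec, dotProduct_sum, smul_mulVec, dotProduct_smul, smul_eq_mul]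
    _ ≤ ∑ x, (c : 𝕜) * (star v ⬝ᵥ (Q x *ᵥ v)) := by
        refine Finset.sum_le_sum fun x _ => ?_
        rcases le_or_gt (lam x) c with hle | hlt
        · exact mul_le_mul_of_nonneg_right (RCLike.ofReal_le_ofReal.mpr hle) (hnonneg x)
        · simp [hv x hlt]
    _ = c * (star v ⬝ᵥ v) := by
        rw [← Finset.mul_sum, ← dotProduct_sum, ← sum_mulVec, hQsum, one_mulVec]

theorem norm_star_dotProduct_sq_le (a b : n → 𝕜) :
    ‖star a ⬝ᵥ b‖ ^ 2 ≤ RCLike.re (star a ⬝ᵥ a) * RCLike.re (star b ⬝ᵥ b) := by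
  have hinner (x y : n → 𝕜) : star x ⬝ᵥ y = inner 𝕜 (WithLp.toLp 2 x) (WithLp.toLp 2 y) := by
    rw [EuclideanSpace.inner_toLp_toLp, dotProduct_comm]
  simpa only [hinner, sq, norm_inner_symm] using
    inner_mul_inner_self_le (WithLp.toLp 2 a) (WithLp.toLp 2 b)

theorem norm_star_dotProduct_sq_le_of_mem_range {P : Matrix n n 𝕜} (hP : P.IsHermitian)
    (hPidem : P * P = P) {w : n → 𝕜} (hw : w ∈ LinearMap.range P.mulVecLin) (v : n → 𝕜) :
    ‖star v ⬝ᵥ w‖ ^ 2 ≤ RCLike.re (star v ⬝ᵥ (P *ᵥ v)) * RCLike.re (star w ⬝ᵥ w) := by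
  obtain ⟨u, rfl⟩ := hw
  have hPw : star v ⬝ᵥ (P *ᵥ u) = star (P *ᵥ v) ⬝ᵥ (P *ᵥ u) := by
    rw [star_mulVec, ← dotProduct_mulVec, mulVec_mulVec, hP.eq, hPidem]
  rw [mulVecLin_apply, hPw, star_dotProduct_mulVec_eq_of_idem hP hPidem]
  exact norm_star_dotProduct_sq_le _ _

end Matrix

section EpsSub

variable {d : ℕ} {ι : Type*} [Fintype ι] {P1 : Matrix (Fin d) (Fin d) ℂ} {lam : ι → ℝ}
  {Q : ι → Matrix (Fin d) (Fin d) ℂ}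

theorem mul_epsSub (hP1idem : P1 * P1 = P1) (hP1Q : ∀ x, lam x ≠ 0 → P1 * Q x = Q x)
    (ε : ℝ) : P1 * epsSub P1 lam Q ε = epsSub P1 lam Q ε := by
  rw [epsSub, mul_sub, hP1idem, Finset.mul_sum]
  congr 1
  exact Finset.sum_congr rfl fun x hx => hP1Q x (Finset.mem_filter.mp hx).2.2

theorem mul_epsSub_eq_zero (hQidem : ∀ x, Q x * Q x = Q x)
    (hQorth : ∀ x y, x ≠ y → Q x * Q y = 0) (hQP1 : ∀ x, lam x ≠ 0 → Q x * P1 = Q x)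
    {ε : ℝ} {x : ι} (hx : ε ^ 2 ≤ lam x ∧ lam x ≠ 0) : Q x * epsSub P1 lam Q ε = 0 := by
  rw [epsSub, mul_sub, hQP1 x hx.2, mul_sum_of_orthogonal hQidem hQorth (by simpa using hx),
    sub_self]

end EpsSub

theorem epsSub_overlap_general {d : ℕ} {ι : Type*} [Fintype ι]
    (P1 P2 : Matrix (Fin d) (Fin d) ℂ)
    (hP1 : P1.IsHermitian) (hP1idem : P1 * P1 = P1)
    (hP2 : P2.IsHermitian) (hP2idem : P2 * P2 = P2)
    (lam : ι → ℝ) (Q : ι → Matrix (Fin d) (Fin d) ℂ)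
    (hQherm : ∀ x, (Q x).IsHermitian) (hQidem : ∀ x, Q x * Q x = Q x)
    (hQorth : ∀ x y, x ≠ y → Q x * Q y = 0) (hQsum : ∑ x, Q x = 1)
    (hspec : P1 * P2 * P1 = ∑ x, ((lam x : ℂ) • Q x))
    (ε : ℝ) (hε : 0 ≤ ε)
    (v w : Fin d → ℂ)
    (hv : v ∈ LinearMap.range (Matrix.mulVecLin (epsSub P1 lam Q ε)))
    (hw : w ∈ LinearMap.range (Matrix.mulVecLin P2))
    (hv1 : star v ⬝ᵥ v = 1) (hw1 : star w ⬝ᵥ w = 1) :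
    ‖star v ⬝ᵥ w‖ ≤ ε := by
  obtain ⟨u, hu⟩ := hv
  rw [mulVecLin_apply] at hu
  have hP1Q x (hx : lam x ≠ 0) : P1 * Q x = Q x :=
    mul_eq_right_of_compression_eq_sum hQidem hQorth hP1idem hspec (by exact_mod_cast hx)
  have hQP1 x (hx : lam x ≠ 0) : Q x * P1 = Q x :=
    mul_eq_left_of_compression_eq_sum hQidem hQorth hP1idem hspec (by exact_mod_cast hx)
  have hP1v : P1 *ᵥ v = v := by rw [← hu, mulVec_mulVec, mul_epsSub hP1idem hP1Q]
  have hQv x (hx : ε ^ 2 < lam x) : Q x *ᵥ v = 0 := by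
    rw [← hu, mulVec_mulVec, mul_epsSub_eq_zero hQidem hQorth hQP1
      ⟨hx.le, ((sq_nonneg ε).trans_lt hx).ne'⟩, zero_mulVec]
  have hcompress : star v ⬝ᵥ (P2 *ᵥ v) ≤ ((ε ^ 2 : ℝ) : ℂ) := by
    have h := star_dotProduct_sum_smul_mulVec_le lam hQherm hQidem hQsum (ε ^ 2) hQv
    rw [hv1, mul_one] at h
    -- `h` is stated with `RCLike.ofReal`, which unfolds to `Complex.ofReal`
    rwa [← star_dotProduct_mul_mul_mulVec hP1 P2 hP1v, hspec]
  have hsq := norm_star_dotProduct_sq_le_of_mem_range hP2 hP2idem hw v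
  rw [hw1, RCLike.one_re, mul_one] at hsq
  exact le_of_pow_le_pow_left₀ two_ne_zero hε
    (hsq.trans ((Complex.re_le_re hcompress).trans_eq (Complex.ofReal_re _)))

/-- Part 2 of Lemma 1: the support of `P₁ ⊖_ε P₂` has overlap at most `ε` with the
range of `P₂`. -/
theorem epsSub_overlap {d : ℕ} {ι : Type*} [Fintype ι]
    (P1 P2 : Matrix (Fin d) (Fin d) ℂ)
    (hP1 : P1.IsHermitian) (hP1idem : P1 * P1 = P1)
    (hP2 : P2.IsHermitian) (hP2idem : P2 * P2 = P2)
    (lam : ι → ℝ) (Q : ι → Matrix (Fin d) (Fin d) ℂ)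
    (hQherm : ∀ x, (Q x).IsHermitian) (hQidem : ∀ x, Q x * Q x = Q x)
    (hQorth : ∀ x y, x ≠ y → Q x * Q y = 0) (hQsum : ∑ x, Q x = 1)
    (hlam_inj : Function.Injective lam) (hlam : ∀ x, 0 ≤ lam x ∧ lam x ≤ 1)
    (hspec : P1 * P2 * P1 = ∑ x, ((lam x : ℂ) • Q x))
    (ε : ℝ) (hε : 0 ≤ ε) (hε1 : ε ≤ 1)
    (v w : Fin d → ℂ)
    (hv : v ∈ LinearMap.range (Matrix.mulVecLin (epsSub P1 lam Q ε)))
    (hw : w ∈ LinearMap.range (Matrix.mulVecLin P2))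
    (hv1 : star v ⬝ᵥ v = 1) (hw1 : star w ⬝ᵥ w = 1) :
    ‖star v ⬝ᵥ w‖ ≤ ε :=
  epsSub_overlap_general P1 P2 hP1 hP1idem hP2 hP2idem lam Q hQherm hQidem hQorth hQsum hspec ε hε v
    w hv hw hv1 hw1
end

section
/- With P1' := P1 ⊖_ε P2 as above and 0 < ε ≤ 1, one has tr(P1 − P1') ≤ (1/ε²) · tr(P1 P2). -/
open Matrix
open scoped ComplexOrder Classical

/-- Part 3 of Lemma 1: `tr (P₁ − P₁ ⊖_ε P₂) ≤ ε⁻² tr (P₁ P₂)` for `0 < ε ≤ 1`. -/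
theorem epsSub_trace_bound {d : ℕ} {ι : Type*} [Fintype ι]
    (P1 P2 : Matrix (Fin d) (Fin d) ℂ)
    (hP1 : P1.IsHermitian) (hP1idem : P1 * P1 = P1)
    (hP2 : P2.IsHermitian) (hP2idem : P2 * P2 = P2)
    (lam : ι → ℝ) (Q : ι → Matrix (Fin d) (Fin d) ℂ)
    (hQherm : ∀ x, (Q x).IsHermitian) (hQidem : ∀ x, Q x * Q x = Q x)
    (hQorth : ∀ x y, x ≠ y → Q x * Q y = 0) (hQsum : ∑ x, Q x = 1)
    (hlam_inj : Function.Injective lam) (hlam : ∀ x, 0 ≤ lam x ∧ lam x ≤ 1)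
    (hspec : P1 * P2 * P1 = ∑ x, ((lam x : ℂ) • Q x))
    (ε : ℝ) (hε : 0 < ε) (hε1 : ε ≤ 1) :
    (Matrix.trace (P1 - epsSub P1 lam Q ε)).re ≤
      (1 / ε ^ 2) * (Matrix.trace (P1 * P2)).re := by
  set S := Finset.univ.filter (fun x => ε ^ 2 ≤ lam x ∧ lam x ≠ 0) with hS
  -- traces of the projectors are nonnegative reals
  have ht : ∀ x, 0 ≤ (Matrix.trace (Q x)).re := by
    intro x
    have hQ : Q x = (Q x)ᴴ * Q x := by
      conv_lhs => rw [← hQidem x]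
      rw [hQherm x]
    rw [hQ]
    simp only [Matrix.trace, Matrix.diag, Matrix.mul_apply, Matrix.conjTranspose_apply,
      Complex.re_sum]
    apply Finset.sum_nonneg
    intro i _
    apply Finset.sum_nonneg
    intro j _
    simp [Complex.mul_re]
    nlinarith [sq_nonneg ((Q x) j i).re, sq_nonneg ((Q x) j i).im]
  -- left side
  have hL : (Matrix.trace (P1 - epsSub P1 lam Q ε)).re = ∑ x ∈ S, (Matrix.trace (Q x)).re := by
    simp [epsSub, sub_sub_cancel, Matrix.trace_sum, Complex.re_sum, hS]
  -- right side
  have hR : (Matrix.trace (P1 * P2)).re = ∑ x, lam x * (Matrix.trace (Q x)).re := by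
    have h1 : Matrix.trace (P1 * P2) = Matrix.trace (P1 * P2 * P1) := by
      rw [Matrix.trace_mul_cycle P1 P2 P1, hP1idem]
    rw [h1, hspec]
    simp [Matrix.trace_sum, Complex.re_sum, Complex.re_ofReal_mul]
  rw [hL, hR, Finset.mul_sum]
  calc ∑ x ∈ S, (Matrix.trace (Q x)).re
      ≤ ∑ x ∈ S, 1 / ε ^ 2 * (lam x * (Matrix.trace (Q x)).re) := by
        apply Finset.sum_le_sum
        intro x hx
        rw [hS, Finset.mem_filter] at hx
        have hε2 : (0:ℝ) < ε ^ 2 := by positivity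
        have h1 : 1 ≤ lam x / ε ^ 2 := (one_le_div hε2).mpr hx.2.1
        calc (Matrix.trace (Q x)).re = 1 * (Matrix.trace (Q x)).re := (one_mul _).symm
          _ ≤ (lam x / ε ^ 2) * (Matrix.trace (Q x)).re := by
              exact mul_le_mul_of_nonneg_right h1 (ht x)
          _ = 1 / ε ^ 2 * (lam x * (Matrix.trace (Q x)).re) := by ring
    _ ≤ ∑ x, 1 / ε ^ 2 * (lam x * (Matrix.trace (Q x)).re) := by
        apply Finset.sum_le_sum_of_subset_of_nonneg (Finset.subset_univ _)
        intro x _ _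
        have := (hlam x).1
        have := ht x
        positivity
end

section
/- Let S_1,…,S_r be subspaces of a finite-dimensional complex Hilbert space such that any two unit vectors v_i ∈ S_i, v_j ∈ S_j with i ≠ j satisfy |⟨v_i, v_j⟩| ≤ δ, where δ < 1/(2(r−1)). Let P_i be the orthogonal projector onto S_i and P the orthogonal projector onto S_1 + ⋯ + S_r. Then P ≤ ((1−(r−1)δ)/(1−2(r−1)δ)) · Σ_{i=1}^r P_i in the Loewner order. -/
open scoped InnerProductSpace

/-- The orthogonal projection onto a subspace, as an operator on the whole space. -/
noncomputable def projCLM {E : Type*} [NormedAddCommGroup E] [InnerProductSpace ℂ E]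
    [FiniteDimensional ℂ E] (S : Submodule ℂ E) : E →L[ℂ] E :=
  S.subtypeL.comp (S.orthogonalProjectionOnto)

/-!
Write `u = P x` as `u = ∑ fᵢ` with `fᵢ ∈ Sᵢ`. The overlap bound makes the `fᵢ` almost
orthogonal: `‖u‖² ≥ (1 - (r-1)δ) ∑ ‖fᵢ‖²`. On the other hand `‖u‖² = ∑ re ⟪Pᵢ x, fᵢ⟫`, which
by Cauchy–Schwarz is at most `(∑ ‖Pᵢ x‖²)^½ (∑ ‖fᵢ‖²)^½`. Combining the two gives
`(1 - a) P ≤ ∑ Pᵢ` with `a = (r-1)δ`, and this implies the claim because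
`(1 - a) / (1 - 2a) ≥ 1 / (1 - a)` when `2a < 1`.
-/

section

open Finset RCLike

lemma mul_le_of_sq_le_mul_of_mul_le {t N A B : ℝ} (hA : 0 ≤ A) (hN : 0 ≤ N)
    (hNAB : N ^ 2 ≤ A * B) (htB : t * B ≤ N) : t * N ≤ A := by
  rcases le_or_gt t 0 with ht | ht
  · nlinarith
  rcases hN.eq_or_lt with rfl | hN
  · simpa using hA
  nlinarith

lemma two_mul_mul_lt_one {m δ : ℝ} (hδ0 : 0 ≤ δ) (hδ : δ < 1 / (2 * m)) : 2 * m * δ < 1 := by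
  have hm : 0 < 2 * m := one_div_pos.mp (hδ0.trans_lt hδ)
  rw [lt_div_iff₀ hm] at hδ
  linarith

lemma one_le_div_mul_self {a : ℝ} (ha : 2 * a < 1) : 1 ≤ (1 - a) / (1 - 2 * a) * (1 - a) := by
  rw [div_mul_eq_mul_div, one_le_div (by linarith)]
  nlinarith [sq_nonneg a]

variable {𝕜 E : Type*} [RCLike 𝕜] [NormedAddCommGroup E] [InnerProductSpace 𝕜 E]

lemma norm_inner_le_mul_norm_mul_norm_of_unit {U V : Submodule 𝕜 E} {δ : ℝ}
    (h : ∀ v ∈ U, ∀ w ∈ V, ‖v‖ = 1 → ‖w‖ = 1 → ‖⟪v, w⟫_𝕜‖ ≤ δ)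
    {v w : E} (hv : v ∈ U) (hw : w ∈ V) : ‖⟪v, w⟫_𝕜‖ ≤ δ * ‖v‖ * ‖w‖ := by
  rcases eq_or_ne v 0 with rfl | hv0
  · simp
  rcases eq_or_ne w 0 with rfl | hw0
  · simp
  have hunit := h _ (U.smul_mem (‖v‖⁻¹ : 𝕜) hv) _ (V.smul_mem (‖w‖⁻¹ : 𝕜) hw)
    (norm_smul_inv_norm hv0) (norm_smul_inv_norm hw0)
  rw [inner_smul_left, inner_smul_right, norm_mul, norm_mul, RCLike.norm_conj,
    norm_inv, norm_inv, norm_algebraMap', norm_algebraMap', norm_norm, norm_norm,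
    inv_mul_le_iff₀ (norm_pos_iff.mpr hv0), inv_mul_le_iff₀ (norm_pos_iff.mpr hw0)] at hunit
  linarith

lemma norm_sum_sq_eq_sum_sum_re_inner {ι : Type*} (s : Finset ι) (f : ι → E) :
    ‖∑ i ∈ s, f i‖ ^ 2 = ∑ i ∈ s, ∑ j ∈ s, re ⟪f i, f j⟫_𝕜 := by
  rw [← inner_self_eq_norm_sq (𝕜 := 𝕜), sum_inner]
  simp_rw [inner_sum, map_sum]

lemma one_sub_mul_sum_norm_sq_le_norm_sum_sq {ι : Type*} [Fintype ι] (f : ι → E) {δ : ℝ}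
    (hδ : 0 ≤ δ) (h : ∀ i j, i ≠ j → ‖⟪f i, f j⟫_𝕜‖ ≤ δ * ‖f i‖ * ‖f j‖) :
    (1 - (Fintype.card ι - 1) * δ) * ∑ i, ‖f i‖ ^ 2 ≤ ‖∑ i, f i‖ ^ 2 := by
  classical
  -- The extra `δ ‖fᵢ‖²` on the diagonal makes one bound valid for every entry of the Gram matrix.
  have entry : ∀ i j, (if i = j then (1 + δ) * ‖f i‖ ^ 2 else 0) - δ * (‖f i‖ * ‖f j‖)
      ≤ re ⟪f i, f j⟫_𝕜 := by
    intro i j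
    split_ifs with hij
    · subst hij
      rw [inner_self_eq_norm_sq]
      linarith
    · have := (abs_le.mp ((abs_re_le_norm _).trans (h i j hij))).1
      linarith
  have hsum := sum_le_sum fun i (_ : i ∈ univ) => sum_le_sum fun j (_ : j ∈ univ) => entry i j
  simp only [sum_sub_distrib, sum_ite_eq, mem_univ, if_true, ← mul_sum, ← sum_mul, ← sq] at hsum
  rw [norm_sum_sq_eq_sum_sum_re_inner (𝕜 := 𝕜)]
  have hcs := mul_le_mul_of_nonneg_left
    (sq_sum_le_card_mul_sum_sq (s := univ) (f := fun i => ‖f i‖)) hδ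
  simp only [card_univ] at hcs
  linarith

namespace Submodule

lemma exists_sum_eq_of_mem_iSup {ι : Type*} [Fintype ι] (S : ι → Submodule 𝕜 E) {x : E}
    (hx : x ∈ ⨆ i, S i) : ∃ f : ι → E, (∀ i, f i ∈ S i) ∧ ∑ i, f i = x := by
  obtain ⟨f, hf, rfl⟩ := (mem_iSup_iff_exists_finsupp S x).mp hx
  exact ⟨f, hf, (Finsupp.sum_fintype f (fun _ x => x) fun _ => rfl).symm⟩

variable (K : Submodule 𝕜 E) [K.HasOrthogonalProjection]

lemma isPositive_starProjection : K.starProjection.IsPositive :=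
  ⟨K.starProjection_isSymmetric, K.re_inner_starProjection_nonneg⟩

lemma re_inner_starProjection_self (x : E) :
    re ⟪K.starProjection x, x⟫_𝕜 = ‖K.starProjection x‖ ^ 2 :=
  K.re_inner_starProjection_eq_normSq x

lemma inner_starProjection_of_mem_right (x : E) {w : E} (hw : w ∈ K) :
    ⟪K.starProjection x, w⟫_𝕜 = ⟪x, w⟫_𝕜 := by
  rw [inner_starProjection_left_eq_right, starProjection_eq_self_iff.mpr hw]

end Submodule

section iSup

variable {ι : Type*} [Fintype ι] (S : ι → Submodule 𝕜 E) [∀ i, (S i).HasOrthogonalProjection]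
  [(⨆ i, S i).HasOrthogonalProjection]

lemma norm_starProjection_iSup_sq_le (x : E) {f : ι → E} (hf : ∀ i, f i ∈ S i)
    (hsum : ∑ i, f i = (⨆ i, S i).starProjection x) :
    ‖(⨆ i, S i).starProjection x‖ ^ 2 ≤ ∑ i, ‖(S i).starProjection x‖ * ‖f i‖ := by
  calc ‖(⨆ i, S i).starProjection x‖ ^ 2
      = re ⟪(⨆ i, S i).starProjection x, ∑ i, f i⟫_𝕜 := by rw [hsum, inner_self_eq_norm_sq]
    _ = ∑ i, re ⟪(S i).starProjection x, f i⟫_𝕜 := by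
        simp only [inner_sum, map_sum, Submodule.inner_starProjection_of_mem_right _ _ (hf _),
          Submodule.inner_starProjection_of_mem_right _ _ (Submodule.mem_iSup_of_mem _ (hf _))]
    _ ≤ ∑ i, ‖(S i).starProjection x‖ * ‖f i‖ :=
        sum_le_sum fun i _ => (re_le_norm _).trans (norm_inner_le_norm _ _)

theorem one_sub_smul_starProjection_iSup_le_sum {δ : ℝ} (hδ : 0 ≤ δ)
    (h : ∀ i j, i ≠ j → ∀ v ∈ S i, ∀ w ∈ S j, ‖⟪v, w⟫_𝕜‖ ≤ δ * ‖v‖ * ‖w‖) :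
    ((1 - (Fintype.card ι - 1) * δ : ℝ) : 𝕜) • (⨆ i, S i).starProjection ≤
      ∑ i, (S i).starProjection := by
  rw [ContinuousLinearMap.le_def]
  refine ⟨?_, fun x => ?_⟩
  · rw [ContinuousLinearMap.toLinearMap_sub, ContinuousLinearMap.toLinearMap_sum,
      ContinuousLinearMap.toLinearMap_smul]
    exact (LinearMap.isSymmetric_sum _ fun i _ => (S i).starProjection_isSymmetric).sub
      ((⨆ i, S i).starProjection_isSymmetric.smul (conj_ofReal _))
  obtain ⟨f, hf, hsum⟩ :=
    Submodule.exists_sum_eq_of_mem_iSup S ((⨆ i, S i).starProjection_apply_mem x)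
  have hgram := one_sub_mul_sum_norm_sq_le_norm_sum_sq (𝕜 := 𝕜) f hδ
    fun i j hij => h i j hij _ (hf i) _ (hf j)
  rw [hsum] at hgram
  have hcs := (pow_le_pow_left₀ (sq_nonneg _) (norm_starProjection_iSup_sq_le S x hf hsum) 2).trans
    (sum_mul_sq_le_sq_mul_sq _ _ _)
  rw [ContinuousLinearMap.reApplyInnerSelf_apply, sub_apply, smul_apply, _root_.sum_apply,
    inner_sub_left, sum_inner, inner_smul_left, conj_ofReal, map_sub, re_ofReal_mul, map_sum,
    Submodule.re_inner_starProjection_self]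
  simp only [Submodule.re_inner_starProjection_self]
  exact sub_nonneg.mpr (mul_le_of_sq_le_mul_of_mul_le (sum_nonneg fun _ _ => sq_nonneg _)
    (sq_nonneg _) hcs hgram)

end iSup

end

lemma ContinuousLinearMap.IsPositive.real_smul_of_nonneg {E : Type*} [NormedAddCommGroup E]
    [InnerProductSpace ℂ E] {T : E →L[ℂ] E} (hT : T.IsPositive) {c : ℝ} (hc : 0 ≤ c) :
    (c • T).IsPositive := by
  simpa only [Complex.coe_smul] using hT.smul_of_nonneg (Complex.zero_le_real.mpr hc)

lemma projCLM_eq_starProjection {E : Type*} [NormedAddCommGroup E] [InnerProductSpace ℂ E]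
    [FiniteDimensional ℂ E] (K : Submodule ℂ E) : projCLM K = K.starProjection :=
  rfl

theorem projector_sum_bound_general {E : Type*} [NormedAddCommGroup E] [InnerProductSpace ℂ E]
    [FiniteDimensional ℂ E] {r : ℕ}
    (S : Fin r → Submodule ℂ E) (δ : ℝ) (hδ0 : 0 ≤ δ)
    (hδ : δ < 1 / (2 * ((r : ℝ) - 1)))
    (hover : ∀ i j, i ≠ j → ∀ v ∈ S i, ∀ w ∈ S j,
      ‖v‖ = 1 → ‖w‖ = 1 → ‖⟪v, w⟫_ℂ‖ ≤ δ) :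
    (((1 - ((r : ℝ) - 1) * δ) / (1 - 2 * ((r : ℝ) - 1) * δ)) • (∑ i, projCLM (S i)) -
        projCLM (⨆ i, S i)).IsPositive := by
  set a := ((r : ℝ) - 1) * δ
  set c := (1 - a) / (1 - 2 * ((r : ℝ) - 1) * δ)
  have ha : 2 * a < 1 := by simpa only [a, mul_assoc] using two_mul_mul_lt_one hδ0 hδ
  have hc : 1 ≤ c * (1 - a) := by simpa only [c, a, mul_assoc] using one_le_div_mul_self ha
  have hbound := one_sub_smul_starProjection_iSup_le_sum S hδ0 fun i j hij _ hv _ hw =>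
    norm_inner_le_mul_norm_mul_norm_of_unit (hover i j hij) hv hw
  rw [Fintype.card_fin] at hbound
  have hsplit : c • ∑ i, projCLM (S i) - projCLM (⨆ i, S i) =
      c • (∑ i, (S i).starProjection - ((1 - a : ℝ) : ℂ) • (⨆ i, S i).starProjection) +
        (c * (1 - a) - 1) • (⨆ i, S i).starProjection := by
    simp only [projCLM_eq_starProjection, Complex.coe_smul]
    module
  rw [hsplit]
  exact (hbound.real_smul_of_nonneg (by nlinarith)).add
    ((Submodule.isPositive_starProjection _).real_smul_of_nonneg (by linarith))

/-- Lemma 3: if the subspaces `S₁, …, S_r` have pairwise overlaps at most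
`δ < 1/(2(r−1))`, then the projector `P` onto `S₁ + ⋯ + S_r` satisfies
`P ≤ (1−(r−1)δ)/(1−2(r−1)δ) · Σᵢ Pᵢ` in the Loewner order. -/
theorem projector_sum_bound {E : Type*} [NormedAddCommGroup E] [InnerProductSpace ℂ E]
    [FiniteDimensional ℂ E] {r : ℕ} (hr : 2 ≤ r)
    (S : Fin r → Submodule ℂ E) (δ : ℝ) (hδ0 : 0 ≤ δ)
    (hδ : δ < 1 / (2 * ((r : ℝ) - 1)))
    (hover : ∀ i j, i ≠ j → ∀ v ∈ S i, ∀ w ∈ S j,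
      ‖v‖ = 1 → ‖w‖ = 1 → ‖⟪v, w⟫_ℂ‖ ≤ δ) :
    (((1 - ((r : ℝ) - 1) * δ) / (1 - 2 * ((r : ℝ) - 1) * δ)) • (∑ i, projCLM (S i)) -
        projCLM (⨆ i, S i)).IsPositive :=
  projector_sum_bound_general S δ hδ0 hδ hover
end

section
/- For any two positive semidefinite matrices A_1 = Σ_k λ_{1k} Q_{1k} and A_2 = Σ_ℓ λ_{2ℓ} Q_{2ℓ} (spectral decompositions), and any s ∈ [0,1], Σ_{k,ℓ} min{λ_{1k}, λ_{2ℓ}} · tr(Q_{1k} Q_{2ℓ}) ≤ tr(A_1^s A_2^{1−s}). -/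
open Matrix
open scoped ComplexOrder Classical

/-- Matrix real power `A ^ s` via functional calculus, with the convention `0 ^ 0 = 0`
(so that `A ^ s` has the same support as `A`). -/
noncomputable def mpow {d : ℕ} {A : Matrix (Fin d) (Fin d) ℂ} (hA : A.IsHermitian) (s : ℝ) :
    Matrix (Fin d) (Fin d) ℂ :=
  (hA.eigenvectorUnitary : Matrix (Fin d) (Fin d) ℂ) *
    Matrix.diagonal (fun i =>
      ((if hA.eigenvalues i = 0 then (0 : ℝ) else (hA.eigenvalues i) ^ s : ℝ) : ℂ)) *
    (star hA.eigenvectorUnitary : Matrix (Fin d) (Fin d) ℂ)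

/-!
Both sides are sums over the pairs `(k, ℓ)`. Writing `A₁ = Σ λ₁ₖ Q₁ₖ` and `A₂ = Σ λ₂ℓ Q₂ℓ`, a
function of `Aᵢ` acts on the same projections, so `tr(A₁^s A₂^{1-s}) = Σ λ₁ₖ^s λ₂ℓ^{1-s} tr(Q₁ₖ Q₂ℓ)`.
Each weight `tr(Q₁ₖ Q₂ℓ) = ‖Q₂ℓ Q₁ₖ‖²_HS` is nonnegative, and
`min{a, b} = min{a, b}^s min{a, b}^{1-s} ≤ a^s b^{1-s}`.
-/

open Polynomial

namespace CompleteOrthogonalIdempotents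

section Semiring

variable {ι R A : Type*} [Fintype ι] [CommSemiring R] [Semiring A] [Algebra R A] {e : ι → A}

theorem sum_smul_mul_sum_smul (he : CompleteOrthogonalIdempotents e) (a b : ι → R) :
    (∑ i, a i • e i) * (∑ i, b i • e i) = ∑ i, (a i * b i) • e i := by
  rw [Finset.sum_mul_sum]
  refine Finset.sum_congr rfl fun i _ => ?_
  rw [Finset.sum_eq_single i
      (fun j _ hji => by rw [smul_mul_smul_comm, he.ortho hji.symm, smul_zero]) (by simp),
    smul_mul_smul_comm, (he.idem i).eq]

theorem sum_smul_pow (he : CompleteOrthogonalIdempotents e) (a : ι → R) (n : ℕ) :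
    (∑ i, a i • e i) ^ n = ∑ i, (a i ^ n) • e i := by
  induction n with
  | zero => simp [he.complete]
  | succ n ih => simp only [pow_succ, ih, he.sum_smul_mul_sum_smul]

theorem aeval_sum_smul (he : CompleteOrthogonalIdempotents e) (a : ι → R) (p : R[X]) :
    aeval (∑ i, a i • e i) p = ∑ i, p.eval (a i) • e i := by
  induction p using Polynomial.induction_on' with
  | add p q hp hq => simp only [map_add, hp, hq, eval_add, add_smul, Finset.sum_add_distrib]
  | monomial n c =>
    simp only [aeval_monomial, he.sum_smul_pow, eval_monomial, Finset.smul_sum,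
      ← Algebra.smul_def, smul_smul]

end Semiring

theorem spectrum_sum_smul_subset {ι R A : Type*} [Fintype ι] [Field R] [Ring A] [Algebra R A]
    {e : ι → A} (he : CompleteOrthogonalIdempotents e) (a : ι → R) :
    spectrum R (∑ i, a i • e i) ⊆ Set.range a := by
  intro x hx
  by_contra hxa
  have hne : ∀ i, x - a i ≠ 0 := fun i h => hxa ⟨i, (sub_eq_zero.mp h).symm⟩
  have hsub : algebraMap R A x - ∑ i, a i • e i = ∑ i, (x - a i) • e i := by
    simp only [sub_smul, Finset.sum_sub_distrib, ← Finset.smul_sum, he.complete,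
      Algebra.algebraMap_eq_smul_one]
  rw [spectrum.mem_iff, hsub] at hx
  refine hx (isUnit_iff_exists.mpr ⟨∑ i, (x - a i)⁻¹ • e i, ?_, ?_⟩)
  · rw [he.sum_smul_mul_sum_smul]
    simp only [mul_inv_cancel₀ (hne _), one_smul, he.complete]
  · rw [he.sum_smul_mul_sum_smul]
    simp only [inv_mul_cancel₀ (hne _), one_smul, he.complete]

/-- On the spectrum, which lies in the finite set `Set.range a`, `f` agrees with a Lagrange
interpolation polynomial. -/
theorem cfc_sum_smul {ι R A : Type*} {p : A → Prop} [Fintype ι] [Field R] [StarRing R]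
    [MetricSpace R] [IsTopologicalSemiring R] [ContinuousStar R] [TopologicalSpace A] [Ring A]
    [StarRing A] [Algebra R A] [ContinuousFunctionalCalculus R A p]
    {e : ι → A} (he : CompleteOrthogonalIdempotents e) (a : ι → R) (f : R → R)
    (ha : p (∑ i, a i • e i)) :
    cfc f (∑ i, a i • e i) = ∑ i, f (a i) • e i := by
  set q := Lagrange.interpolate (Finset.univ.image a) id f
  have hq : ∀ i, q.eval (a i) = f (a i) := fun i =>
    Lagrange.eval_interpolate_at_node f (Set.injOn_id _)
      (Finset.mem_image_of_mem a (Finset.mem_univ i))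
  have hspec : (spectrum R (∑ i, a i • e i)).EqOn f q.eval := by
    intro x hx
    obtain ⟨i, rfl⟩ := he.spectrum_sum_smul_subset a hx
    exact (hq i).symm
  rw [cfc_congr hspec, cfc_polynomial q _ ha, he.aeval_sum_smul]
  simp only [hq]

end CompleteOrthogonalIdempotents

theorem Real.min_le_rpow_mul_rpow {a b s : ℝ} (ha : 0 ≤ a) (hb : 0 ≤ b) (hs₀ : 0 ≤ s)
    (hs₁ : s ≤ 1) : min a b ≤ a ^ s * b ^ (1 - s) := by
  have hm : 0 ≤ min a b := le_min ha hb
  calc min a b = min a b ^ s * min a b ^ (1 - s) := by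
        rw [← Real.rpow_add_of_nonneg hm hs₀ (by linarith), add_sub_cancel, Real.rpow_one]
    _ ≤ a ^ s * b ^ (1 - s) := by gcongr <;> simp

/-- `x ^ s` with `0 ^ s := 0` also for `s = 0`, the convention of `mpow`. -/
noncomputable def supportRpow (s x : ℝ) : ℝ := if x = 0 then 0 else x ^ s

theorem min_le_supportRpow_mul_supportRpow {a b s : ℝ} (ha : 0 ≤ a) (hb : 0 ≤ b) (hs₀ : 0 ≤ s)
    (hs₁ : s ≤ 1) : min a b ≤ supportRpow s a * supportRpow (1 - s) b := by
  unfold supportRpow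
  split_ifs with ha0 hb0 hb0
  · simp [ha0]
  · simp [ha0, hb]
  · simp [hb0, ha]
  · exact Real.min_le_rpow_mul_rpow ha hb hs₀ hs₁

theorem mpow_eq_cfc {d : ℕ} {A : Matrix (Fin d) (Fin d) ℂ} (hA : A.IsHermitian) (s : ℝ) :
    mpow hA s = cfc (supportRpow s) A := by
  rw [hA.cfc_eq, IsHermitian.cfc, Unitary.conjStarAlgAut_apply]
  rfl

theorem mpow_eq_sum_smul {d : ℕ} {ι : Type*} [Fintype ι] {A : Matrix (Fin d) (Fin d) ℂ}
    (hA : A.IsHermitian) {lam : ι → ℝ} {Q : ι → Matrix (Fin d) (Fin d) ℂ}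
    (hQ : CompleteOrthogonalIdempotents Q) (hspec : A = ∑ k, (lam k : ℂ) • Q k) (s : ℝ) :
    mpow hA s = ∑ k, supportRpow s (lam k) • Q k := by
  have hspec' : A = ∑ k, lam k • Q k := by simpa only [Complex.coe_smul] using hspec
  rw [mpow_eq_cfc, hspec']
  exact hQ.cfc_sum_smul lam _ (hspec' ▸ hA)

theorem Matrix.trace_mul_nonneg_of_isStarProjection {n 𝕜 : Type*} [Fintype n] [RCLike 𝕜]
    {P R : Matrix n n 𝕜} (hP : IsStarProjection P) (hR : IsStarProjection R) :
    0 ≤ (P * R).trace := by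
  have hP' : Pᴴ = P := hP.isSelfAdjoint
  have hR' : Rᴴ = R := hR.isSelfAdjoint
  calc 0 ≤ ((R * P)ᴴ * (R * P)).trace := (posSemidef_conjTranspose_mul_self _).trace_nonneg
    _ = (P * R * P).trace := by
      rw [conjTranspose_mul, hP', hR', ← mul_assoc, mul_assoc P R R, hR.isIdempotentElem.eq]
    _ = (P * R).trace := by rw [trace_mul_comm, ← mul_assoc, hP.isIdempotentElem.eq]

theorem Matrix.re_trace_sum_smul_mul_sum_smul {n ι κ : Type*} [Fintype n] [Fintype ι]
    [Fintype κ] (a : ι → ℝ) (b : κ → ℝ) (P : ι → Matrix n n ℂ) (R : κ → Matrix n n ℂ) :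
    (((∑ i, a i • P i) * ∑ j, b j • R j).trace).re =
      ∑ i, ∑ j, a i * b j * ((P i * R j).trace).re := by
  simp only [Finset.sum_mul_sum, trace_sum, smul_mul_smul_comm, trace_smul, Complex.re_sum,
    Complex.smul_re, smul_eq_mul, mul_assoc]

theorem min_sum_le_trace_power_general {d : ℕ} {ι₁ ι₂ : Type*} [Fintype ι₁] [Fintype ι₂]
    (A1 A2 : Matrix (Fin d) (Fin d) ℂ) (hA1 : A1.PosSemidef) (hA2 : A2.PosSemidef)
    (lam1 : ι₁ → ℝ) (lam2 : ι₂ → ℝ)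
    (Q1 : ι₁ → Matrix (Fin d) (Fin d) ℂ) (Q2 : ι₂ → Matrix (Fin d) (Fin d) ℂ)
    (hQ1herm : ∀ k, (Q1 k).IsHermitian) (hQ1idem : ∀ k, Q1 k * Q1 k = Q1 k)
    (hQ1orth : ∀ k k', k ≠ k' → Q1 k * Q1 k' = 0) (hQ1sum : ∑ k, Q1 k = 1)
    (hQ2herm : ∀ l, (Q2 l).IsHermitian) (hQ2idem : ∀ l, Q2 l * Q2 l = Q2 l)
    (hQ2orth : ∀ l l', l ≠ l' → Q2 l * Q2 l' = 0) (hQ2sum : ∑ l, Q2 l = 1)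
    (hlam1 : ∀ k, 0 ≤ lam1 k) (hlam2 : ∀ l, 0 ≤ lam2 l)
    (hspec1 : A1 = ∑ k, ((lam1 k : ℂ) • Q1 k)) (hspec2 : A2 = ∑ l, ((lam2 l : ℂ) • Q2 l))
    (s : ℝ) (hs : s ∈ Set.Icc (0 : ℝ) 1) :
    ∑ k, ∑ l, min (lam1 k) (lam2 l) * (Matrix.trace (Q1 k * Q2 l)).re ≤
      (Matrix.trace (mpow hA1.1 s * mpow hA2.1 (1 - s))).re := by
  have hQ1 : CompleteOrthogonalIdempotents Q1 := ⟨⟨hQ1idem, hQ1orth⟩, hQ1sum⟩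
  have hQ2 : CompleteOrthogonalIdempotents Q2 := ⟨⟨hQ2idem, hQ2orth⟩, hQ2sum⟩
  rw [mpow_eq_sum_smul hA1.1 hQ1 hspec1, mpow_eq_sum_smul hA2.1 hQ2 hspec2,
    re_trace_sum_smul_mul_sum_smul]
  gcongr with k _ l _
  · exact (Complex.nonneg_iff.mp <| trace_mul_nonneg_of_isStarProjection
      ⟨hQ1idem k, hQ1herm k⟩ ⟨hQ2idem l, hQ2herm l⟩).1
  · exact min_le_supportRpow_mul_supportRpow (hlam1 k) (hlam2 l) hs.1 hs.2

/-- Equation (6): `Σ_{k,ℓ} min{λ_{1k}, λ_{2ℓ}} tr(Q_{1k} Q_{2ℓ}) ≤ tr(A₁^s A₂^{1−s})`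
for any `s ∈ [0,1]`. -/
theorem min_sum_le_trace_power {d : ℕ} {ι₁ ι₂ : Type*} [Fintype ι₁] [Fintype ι₂]
    (A1 A2 : Matrix (Fin d) (Fin d) ℂ) (hA1 : A1.PosSemidef) (hA2 : A2.PosSemidef)
    (lam1 : ι₁ → ℝ) (lam2 : ι₂ → ℝ)
    (Q1 : ι₁ → Matrix (Fin d) (Fin d) ℂ) (Q2 : ι₂ → Matrix (Fin d) (Fin d) ℂ)
    (hQ1herm : ∀ k, (Q1 k).IsHermitian) (hQ1idem : ∀ k, Q1 k * Q1 k = Q1 k)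
    (hQ1orth : ∀ k k', k ≠ k' → Q1 k * Q1 k' = 0) (hQ1sum : ∑ k, Q1 k = 1)
    (hQ2herm : ∀ l, (Q2 l).IsHermitian) (hQ2idem : ∀ l, Q2 l * Q2 l = Q2 l)
    (hQ2orth : ∀ l l', l ≠ l' → Q2 l * Q2 l' = 0) (hQ2sum : ∑ l, Q2 l = 1)
    (hlam1 : ∀ k, 0 ≤ lam1 k) (hlam2 : ∀ l, 0 ≤ lam2 l)
    (hlam1inj : Function.Injective lam1) (hlam2inj : Function.Injective lam2)
    (hspec1 : A1 = ∑ k, ((lam1 k : ℂ) • Q1 k)) (hspec2 : A2 = ∑ l, ((lam2 l : ℂ) • Q2 l))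
    (s : ℝ) (hs : s ∈ Set.Icc (0 : ℝ) 1) :
    ∑ k, ∑ l, min (lam1 k) (lam2 l) * (Matrix.trace (Q1 k * Q2 l)).re ≤
      (Matrix.trace (mpow hA1.1 s * mpow hA2.1 (1 - s))).re :=
  min_sum_le_trace_power_general A1 A2 hA1 hA2 lam1 lam2 Q1 Q2 hQ1herm hQ1idem hQ1orth hQ1sum
    hQ2herm hQ2idem hQ2orth hQ2sum hlam1 hlam2 hspec1 hspec2 s hs
end

section
/- Let A_1,…,A_r be positive semidefinite matrices with spectral decompositions A_i = Σ_k λ_{ik} Q_{ik}. Then P_e*({A_1,…,A_r}) ≥ (1/(2(r−1))) · Σ_{i<j} Σ_{k,ℓ} min{λ_{ik}, λ_{jℓ}} tr(Q_{ik} Q_{jℓ}). -/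
/-!
For two hypotheses `A = ∑ λₖ Pₖ`, `B = ∑ μₗ Qₗ` and a test `0 ≤ M ≤ 1`, split
`Qₗ Pₖ = Qₗ (1 - M) Pₖ + Qₗ M Pₖ`. The parallelogram law for the Frobenius norm gives
`tr (Pₖ Qₗ) = ‖Qₗ Pₖ‖² ≤ 2 (‖Qₗ (1 - M) Pₖ‖² + ‖Pₖ M Qₗ‖²)`. Summing the first term over `l`
(using `∑ Qₗ = 1`) gives `‖(1 - M) Pₖ‖² ≤ tr (Pₖ (1 - M))`, because `(1 - M)² ≤ 1 - M`; likewise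
the second term summed over `k` is at most `tr (Qₗ M)`. Bounding `min λₖ μₗ` by `λₖ`, resp. `μₗ`,
yields `∑ min λₖ μₗ tr (Pₖ Qₗ) ≤ 2 (tr (A (1 - M)) + tr (B M))`.

For a POVM `(Mᵢ)` and `i ≠ j` we have `Mᵢ ≤ 1 - Mⱼ`, so taking `M = Mᵢ` bounds the pair `(i, j)`
by `2 (eᵢ + eⱼ)` with `eᵢ = tr (Aᵢ (1 - Mᵢ))`; each `eᵢ` occurs in `r - 1` pairs.
-/

open Matrix
open scoped ComplexOrder Classical

/-- A POVM with `r` outcomes. -/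
def IsPOVM {m : Type*} [Fintype m] [DecidableEq m] {r : ℕ}
    (M : Fin r → Matrix m m ℂ) : Prop :=
  (∀ i, (M i).PosSemidef) ∧ (∀ i, ((1 : Matrix m m ℂ) - M i).PosSemidef) ∧ (∑ i, M i = 1)

/-- Optimal average error probability for discriminating the (possibly non-normalized)
ensemble `A`, minimized over all POVMs. -/
noncomputable def Pe {m : Type*} [Fintype m] [DecidableEq m] {r : ℕ}
    (A : Fin r → Matrix m m ℂ) : ℝ :=
  sInf { e | ∃ M : Fin r → Matrix m m ℂ, IsPOVM M ∧
      e = ∑ i, (Matrix.trace (A i * (1 - M i))).re }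

namespace Matrix

variable {m n : Type*} [Fintype m] [Fintype n]

lemma PosSemidef.re_trace_nonneg {A : Matrix n n ℂ} (hA : A.PosSemidef) : 0 ≤ A.trace.re :=
  (Complex.nonneg_iff.mp hA.trace_nonneg).1

lemma PosSemidef.exists_isHermitian_mul_self_eq [DecidableEq n] {B : Matrix n n ℂ}
    (hB : B.PosSemidef) : ∃ S : Matrix n n ℂ, S.IsHermitian ∧ S * S = B :=
  open scoped MatrixOrder in
  ⟨CFC.sqrt B, (CFC.sqrt_nonneg B).posSemidef.isHermitian, CFC.sqrt_mul_sqrt_self B hB.nonneg⟩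

lemma PosSemidef.re_trace_mul_nonneg [DecidableEq n] {A B : Matrix n n ℂ} (hA : A.PosSemidef)
    (hB : B.PosSemidef) : 0 ≤ (A * B).trace.re := by
  obtain ⟨S, hS, rfl⟩ := hB.exists_isHermitian_mul_self_eq
  have hSAS : (S * A * S).PosSemidef := by
    simpa only [hS.eq] using hA.mul_mul_conjTranspose_same S
  rw [← mul_assoc, trace_mul_comm, ← mul_assoc]
  exact hSAS.re_trace_nonneg

lemma PosSemidef.sub_mul_self [DecidableEq n] {N : Matrix n n ℂ} (hN : N.PosSemidef)
    (hN1 : (1 - N).PosSemidef) : (N - N * N).PosSemidef := by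
  obtain ⟨S, hS, rfl⟩ := hN.exists_isHermitian_mul_self_eq
  have h := hN1.mul_mul_conjTranspose_same S
  rw [hS.eq] at h
  convert h using 1
  noncomm_ring

noncomputable def frobeniusNormSq (X : Matrix m n ℂ) : ℝ := (Xᴴ * X).trace.re

lemma frobeniusNormSq_nonneg (X : Matrix m n ℂ) : 0 ≤ frobeniusNormSq X :=
  (posSemidef_conjTranspose_mul_self X).re_trace_nonneg

lemma frobeniusNormSq_conjTranspose (X : Matrix n n ℂ) :
    frobeniusNormSq Xᴴ = frobeniusNormSq X := by
  rw [frobeniusNormSq, frobeniusNormSq, conjTranspose_conjTranspose, trace_mul_comm]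

lemma frobeniusNormSq_add_le (X Y : Matrix m n ℂ) :
    frobeniusNormSq (X + Y) ≤ 2 * (frobeniusNormSq X + frobeniusNormSq Y) := by
  have parallelogram : (X + Y)ᴴ * (X + Y) + (X - Y)ᴴ * (X - Y) =
      Xᴴ * X + Xᴴ * X + (Yᴴ * Y + Yᴴ * Y) := by
    simp only [conjTranspose_add, conjTranspose_sub, Matrix.add_mul, Matrix.mul_add,
      Matrix.sub_mul, Matrix.mul_sub]
    abel
  have h := congrArg (fun Z => Z.trace.re) parallelogram
  simp only [trace_add, Complex.add_re] at h
  have hdiff := frobeniusNormSq_nonneg (X - Y)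
  unfold frobeniusNormSq at *
  linarith

end Matrix

namespace IsStarProjection

variable {n : Type*} [Fintype n] {P Q : Matrix n n ℂ}

lemma conjTranspose_eq (hP : IsStarProjection P) : Pᴴ = P :=
  hP.isSelfAdjoint

lemma posSemidef (hP : IsStarProjection P) : P.PosSemidef := by
  simpa only [hP.conjTranspose_eq, hP.isIdempotentElem.eq] using posSemidef_conjTranspose_mul_self P

lemma frobeniusNormSq_mul (hP : IsStarProjection P) (hQ : IsStarProjection Q) :
    frobeniusNormSq (Q * P) = (P * Q).trace.re := by
  rw [frobeniusNormSq, conjTranspose_mul, hP.conjTranspose_eq, hQ.conjTranspose_eq, mul_assoc,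
    ← mul_assoc Q, hQ.isIdempotentElem.eq, ← mul_assoc, trace_mul_comm, ← mul_assoc,
    hP.isIdempotentElem.eq]

variable [DecidableEq n]

lemma frobeniusNormSq_mul_le (hP : IsStarProjection P) {R : Matrix n n ℂ} (hR : R.PosSemidef)
    (hR1 : (1 - R).PosSemidef) : frobeniusNormSq (R * P) ≤ (P * R).trace.re := by
  have hsq : frobeniusNormSq (R * P) = (P * (R * R)).trace.re := by
    rw [frobeniusNormSq, conjTranspose_mul, hP.conjTranspose_eq, hR.1.eq, trace_mul_comm,
      mul_assoc, ← mul_assoc P, hP.isIdempotentElem.eq, ← mul_assoc, trace_mul_comm,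
      ← mul_assoc, trace_mul_comm]
  have h := hP.posSemidef.re_trace_mul_nonneg (hR.sub_mul_self hR1)
  rw [mul_sub, trace_sub, Complex.sub_re] at h
  linarith

lemma re_trace_mul_le (hP : IsStarProjection P) (hQ : IsStarProjection Q) {M : Matrix n n ℂ}
    (hM : M.IsHermitian) :
    (P * Q).trace.re ≤
      2 * (frobeniusNormSq (Q * ((1 - M) * P)) + frobeniusNormSq (P * (M * Q))) := by
  have hsplit : Q * P = Q * ((1 - M) * P) + Q * (M * P) := by noncomm_ring
  have hflip : frobeniusNormSq (Q * (M * P)) = frobeniusNormSq (P * (M * Q)) := by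
    rw [← frobeniusNormSq_conjTranspose]
    simp only [conjTranspose_mul, hP.conjTranspose_eq, hQ.conjTranspose_eq, hM.eq, mul_assoc]
  rw [← hP.frobeniusNormSq_mul hQ, hsplit, ← hflip]
  exact frobeniusNormSq_add_le _ _

end IsStarProjection

namespace Matrix

variable {n : Type*} [Fintype n]

lemma sum_frobeniusNormSq_mul_of_sum_eq_one [DecidableEq n] {ι : Type*} [Fintype ι]
    {P : ι → Matrix n n ℂ} (hP : ∀ i, IsStarProjection (P i)) (hsum : ∑ i, P i = 1)
    (X : Matrix n n ℂ) : ∑ i, frobeniusNormSq (P i * X) = frobeniusNormSq X := by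
  have h : ∀ i, (P i * X)ᴴ * (P i * X) = Xᴴ * P i * X := fun i => by
    rw [conjTranspose_mul, (hP i).conjTranspose_eq, mul_assoc, ← mul_assoc (P i),
      (hP i).isIdempotentElem.eq, ← mul_assoc]
  simp only [frobeniusNormSq, h, ← Complex.re_sum, ← trace_sum, ← Finset.sum_mul,
    ← Finset.mul_sum, hsum, mul_one]

lemma re_trace_sum_smul_mul {ι : Type*} [Fintype ι] (c : ι → ℝ) (P : ι → Matrix n n ℂ)
    (X : Matrix n n ℂ) :
    ((∑ k, (c k : ℂ) • P k) * X).trace.re = ∑ k, c k * (P k * X).trace.re := by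
  simp [Finset.sum_mul, trace_sum, Complex.re_sum, trace_smul]

theorem sum_min_mul_re_trace_le [DecidableEq n] {ι κ : Type*} [Fintype ι] [Fintype κ]
    {P : ι → Matrix n n ℂ} {Q : κ → Matrix n n ℂ}
    (hP : ∀ k, IsStarProjection (P k)) (hPsum : ∑ k, P k = 1)
    (hQ : ∀ l, IsStarProjection (Q l)) (hQsum : ∑ l, Q l = 1)
    {a : ι → ℝ} {b : κ → ℝ} (ha : ∀ k, 0 ≤ a k) (hb : ∀ l, 0 ≤ b l)
    {M : Matrix n n ℂ} (hM : M.PosSemidef) (hM1 : (1 - M).PosSemidef) :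
    ∑ k, ∑ l, min (a k) (b l) * (P k * Q l).trace.re ≤
      2 * (((∑ k, (a k : ℂ) • P k) * (1 - M)).trace.re +
        ((∑ l, (b l : ℂ) • Q l) * M).trace.re) := by
  set x := fun k l => frobeniusNormSq (Q l * ((1 - M) * P k))
  set y := fun k l => frobeniusNormSq (P k * (M * Q l))
  have hterm : ∀ k l, min (a k) (b l) * (P k * Q l).trace.re ≤
      2 * (a k * x k l + b l * y k l) := by
    intro k l
    have hmin : 0 ≤ min (a k) (b l) := le_min (ha k) (hb l)
    have hx0 := frobeniusNormSq_nonneg (Q l * ((1 - M) * P k))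
    have hy0 := frobeniusNormSq_nonneg (P k * (M * Q l))
    calc min (a k) (b l) * (P k * Q l).trace.re
        ≤ min (a k) (b l) * (2 * (x k l + y k l)) := by
          gcongr; exact (hP k).re_trace_mul_le (hQ l) hM.1
      _ ≤ 2 * (a k * x k l + b l * y k l) := by
          nlinarith [min_le_left (a k) (b l), min_le_right (a k) (b l)]
  have hx : ∀ k, ∑ l, x k l ≤ (P k * (1 - M)).trace.re := fun k =>
    (sum_frobeniusNormSq_mul_of_sum_eq_one hQ hQsum _).trans_le
      ((hP k).frobeniusNormSq_mul_le hM1 (by rwa [sub_sub_cancel]))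
  have hy : ∀ l, ∑ k, y k l ≤ (Q l * M).trace.re := fun l =>
    (sum_frobeniusNormSq_mul_of_sum_eq_one hP hPsum _).trans_le
      ((hQ l).frobeniusNormSq_mul_le hM hM1)
  rw [re_trace_sum_smul_mul, re_trace_sum_smul_mul]
  calc ∑ k, ∑ l, min (a k) (b l) * (P k * Q l).trace.re
      ≤ ∑ k, ∑ l, 2 * (a k * x k l + b l * y k l) :=
        Finset.sum_le_sum fun k _ => Finset.sum_le_sum fun l _ => hterm k l
    _ = 2 * (∑ k, a k * ∑ l, x k l + ∑ l, b l * ∑ k, y k l) := by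
      simp only [Finset.mul_sum, mul_add, Finset.sum_add_distrib]
      congr 1
      exact Finset.sum_comm
    _ ≤ _ := by
      gcongr with k _ l _
      · exact ha k
      · exact hx k
      · exact hb l
      · exact hy l

end Matrix

namespace Finset

lemma sum_sum_filter_lt_add {ι M : Type*} [Fintype ι] [LinearOrder ι] [AddCommMonoid M]
    (f : ι → M) :
    ∑ i, ∑ j ∈ univ.filter (fun j => i < j), (f i + f j) = (Fintype.card ι - 1) • ∑ i, f i := by
  have hswap : ∑ i, ∑ j ∈ univ.filter (fun j => i < j), f j =
      ∑ i, ∑ j ∈ univ.filter (fun j => j < i), f i := by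
    simp only [sum_filter]
    exact sum_comm
  have hcard : ∀ i : ι, #(univ.filter (fun j => i < j)) + #(univ.filter (fun j => j < i)) =
      Fintype.card ι - 1 := fun i => by
    rw [← card_union_of_disjoint (disjoint_filter.2 fun j _ h h' => lt_asymm h h'), ← filter_or,
      ← card_univ, ← card_erase_of_mem (mem_univ i)]
    congr 1
    ext j
    simp [ne_comm]
  simp only [sum_add_distrib]
  rw [hswap, ← sum_add_distrib, smul_sum]
  simp only [sum_const, ← add_smul, hcard]

end Finset

namespace IsPOVM

variable {m : Type*} [Fintype m] [DecidableEq m] {r : ℕ} {M : Fin r → Matrix m m ℂ}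

lemma posSemidef_one_sub_sub (hM : IsPOVM M) {i j : Fin r} (hij : i ≠ j) :
    (1 - M j - M i).PosSemidef := by
  have h : 1 - M j - M i = ∑ k ∈ (Finset.univ.erase j).erase i, M k := by
    rw [Finset.sum_erase_eq_sub (Finset.mem_erase.2 ⟨hij, Finset.mem_univ i⟩),
      Finset.sum_erase_eq_sub (Finset.mem_univ j), hM.2.2]
  rw [h]
  exact posSemidef_sum _ fun k _ => hM.1 k

lemma re_trace_mul_le (hM : IsPOVM M) {A : Matrix m m ℂ} (hA : A.PosSemidef) {i j : Fin r}
    (hij : i ≠ j) : (A * M i).trace.re ≤ (A * (1 - M j)).trace.re := by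
  have h := hA.re_trace_mul_nonneg (hM.posSemidef_one_sub_sub hij)
  rw [mul_sub, trace_sub, Complex.sub_re] at h
  linarith

end IsPOVM

lemma isPOVM_single {m : Type*} [Fintype m] [DecidableEq m] {r : ℕ} (i : Fin r) :
    IsPOVM (Pi.single i (1 : Matrix m m ℂ)) := by
  refine ⟨fun j => ?_, fun j => ?_, by simp⟩ <;>
    rcases eq_or_ne j i with rfl | hj <;> simp [*, PosSemidef.zero, PosSemidef.one]

theorem one_shot_optimality_general {d r : ℕ}
    (A : Fin r → Matrix (Fin d) (Fin d) ℂ) (hA : ∀ i, (A i).PosSemidef)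
    (T : Fin r → ℕ)
    (lam : ∀ i : Fin r, Fin (T i) → ℝ) (Q : ∀ i : Fin r, Fin (T i) → Matrix (Fin d) (Fin d) ℂ)
    (hQherm : ∀ i k, (Q i k).IsHermitian) (hQidem : ∀ i k, Q i k * Q i k = Q i k)
    (hQsum : ∀ i, ∑ k, Q i k = 1)
    (hlam : ∀ i k, 0 ≤ lam i k)
    (hspec : ∀ i, A i = ∑ k, ((lam i k : ℂ) • Q i k))
    (hr : 2 ≤ r) :
    (1 / (2 * ((r : ℝ) - 1))) *
      ∑ i, ∑ j ∈ Finset.univ.filter (fun j => i < j),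
        ∑ k, ∑ l, min (lam i k) (lam j l) * (Matrix.trace (Q i k * Q j l)).re ≤ Pe A := by
  have hpos : 0 < 2 * ((r : ℝ) - 1) := by
    have : (2 : ℝ) ≤ r := by exact_mod_cast hr
    linarith
  refine le_csInf ⟨_, Pi.single ⟨0, by omega⟩ 1, isPOVM_single _, rfl⟩ ?_
  rintro _ ⟨M, hM, rfl⟩
  set e : Fin r → ℝ := fun i => (A i * (1 - M i)).trace.re
  have hpair : ∀ i j, i < j → ∑ k, ∑ l, min (lam i k) (lam j l) * (Q i k * Q j l).trace.re ≤
      2 * (e i + e j) := fun i j hij => by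
    have h := sum_min_mul_re_trace_le (fun k => ⟨hQidem i k, hQherm i k⟩) (hQsum i)
      (fun l => ⟨hQidem j l, hQherm j l⟩) (hQsum j) (hlam i) (hlam j) (hM.1 i) (hM.2.1 i)
    rw [← hspec i, ← hspec j] at h
    linarith [hM.re_trace_mul_le (hA j) hij.ne]
  rw [one_div, inv_mul_le_iff₀ hpos]
  calc _ ≤ ∑ i, ∑ j ∈ Finset.univ.filter (fun j => i < j), 2 * (e i + e j) := by
        gcongr with i _ j hj
        exact hpair i j (Finset.mem_filter.1 hj).2
    _ = 2 * ((r : ℝ) - 1) * ∑ i, e i := by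
        simp only [← Finset.mul_sum, Finset.sum_sum_filter_lt_add, Fintype.card_fin, nsmul_eq_mul]
        push_cast [Nat.cast_sub (by omega : 1 ≤ r)]
        ring

/-- Nussbaum–Szkoła-type one-shot lower bound: for positive semidefinite matrices `A_i` with
spectral decompositions `A_i = Σ_k λ_{ik} Q_{ik}`,
`P_e*({A_i}) ≥ (1/(2(r−1))) Σ_{i<j} Σ_{k,ℓ} min{λ_{ik}, λ_{jℓ}} tr(Q_{ik} Q_{jℓ})`. -/
theorem one_shot_optimality {d r : ℕ}
    (A : Fin r → Matrix (Fin d) (Fin d) ℂ) (hA : ∀ i, (A i).PosSemidef)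
    (T : Fin r → ℕ)
    (lam : ∀ i : Fin r, Fin (T i) → ℝ) (Q : ∀ i : Fin r, Fin (T i) → Matrix (Fin d) (Fin d) ℂ)
    (hQherm : ∀ i k, (Q i k).IsHermitian) (hQidem : ∀ i k, Q i k * Q i k = Q i k)
    (hQorth : ∀ i, ∀ k k', k ≠ k' → Q i k * Q i k' = 0) (hQsum : ∀ i, ∑ k, Q i k = 1)
    (hlam : ∀ i k, 0 ≤ lam i k) (hlaminj : ∀ i, Function.Injective (lam i))
    (hspec : ∀ i, A i = ∑ k, ((lam i k : ℂ) • Q i k))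
    (hr : 2 ≤ r) :
    (1 / (2 * ((r : ℝ) - 1))) *
      ∑ i, ∑ j ∈ Finset.univ.filter (fun j => i < j),
        ∑ k, ∑ l, min (lam i k) (lam j l) * (Matrix.trace (Q i k * Q j l)).re ≤ Pe A :=
  one_shot_optimality_general A hA T lam Q hQherm hQidem hQsum hlam hspec hr
end
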